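/- arXiv:1203.0973 — 2 statements merged into one kernel-verified Lean document; each statement's English description precedes it below -/
import Mathlib

section
/- Let q, n ≥ 1 be integers and let X be a nonempty compact topological space. For i = 1,…,n let (ξ_{i,x})_{x∈X} be a family of characters of the lattice Λ = ℤ^q (group homomorphisms Λ → ℂ*) such that for each basis vector e_j the map x ↦ ξ_{i,x}(e_j) is continuous on X and satisfies |ξ_{i,x}(e_j)| ≤ 1 for all x ∈ X and all j. Let (f_x)_{x∈X} be a family of functions Λ → ℂ such that for each λ ∈ Λ the map x ↦ f_x(λ) is continuous on X, and such that for all x ∈ X and all λ ∈ Λ the composed operator identity (ρ(λ) − ξ_{1,x}(λ))⋯(ρ(λ) − ξ_{n,x}(λ)) f_x = 0 holds, i.e. for every μ ∈ Λ one has Σ_{S ⊆ {1,…,n}} (−1)^{|S|} (∏_{i∈S} ξ_{i,x}(λ)) · f_x(μ + (n − |S|)·λ) = 0. Then there exist a constant C > 0 and d ∈ ℕ such that |f_x(λ)| ≤ C (1 + |λ|)^d for all x ∈ X and all λ ∈ Λ⁺. -/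
/-! Along each basis vector `e_j` the recurrence says that `t ↦ f x (l + t • e_j)` is killed by
`∏ i, (τ - ξ i x e_j)`, `τ` the shift, whose roots have modulus at most `1`. Peeling off one
factor `τ - c` at a time and telescoping with `‖c‖ ≤ 1`, such a sequence grows at most like
`(2 (1 + k)) ^ n` times the largest of its first `n` values. On the box `[0, n) ^ q` compactness
of `X` gives a uniform bound; releasing one coordinate at a time extends it to the positive cone
with degree `n q`. -/

open Finset Function

section ShiftRecurrence

variable {ι : Type*}

def shiftSub (c : ℂ) (u : ℕ → ℂ) (m : ℕ) : ℂ := u (m + 1) - c * u m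

/-- `(∏ i ∈ s, (τ - a i)) u` at `k`, where `τ u = u (· + 1)`, with the product expanded. -/
def shiftProdApply (a : ι → ℂ) (s : Finset ι) (u : ℕ → ℂ) (k : ℕ) : ℂ :=
  ∑ S ∈ s.powerset, (-1) ^ #S * (∏ i ∈ S, a i) * u (k + (#s - #S))

theorem shiftProdApply_empty (a : ι → ℂ) (u : ℕ → ℂ) : shiftProdApply a ∅ u = u := by
  funext k
  simp [shiftProdApply]

theorem shiftProdApply_insert [DecidableEq ι] (a : ι → ℂ) {j : ι} {s : Finset ι} (hj : j ∉ s)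
    (u : ℕ → ℂ) : shiftProdApply a (insert j s) u = shiftProdApply a s (shiftSub (a j) u) := by
  funext k
  simp only [shiftProdApply, sum_powerset_insert hj, card_insert_of_notMem hj,
    ← sum_add_distrib]
  refine sum_congr rfl fun S hS => ?_
  have hjS : j ∉ S := fun h => hj (mem_powerset.mp hS h)
  have hSs : #S ≤ #s := card_le_card (mem_powerset.mp hS)
  rw [card_insert_of_notMem hjS, prod_insert hjS,
    show k + (#s + 1 - #S) = k + (#s - #S) + 1 by omega,
    show k + (#s + 1 - (#S + 1)) = k + (#s - #S) by omega]
  simp only [shiftSub]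
  ring

theorem norm_mul_le_of_norm_le_one {c : ℂ} (hc : ‖c‖ ≤ 1) (z : ℂ) : ‖c * z‖ ≤ ‖z‖ :=
  (norm_mul c z).trans_le (mul_le_of_le_one_left (norm_nonneg z) hc)

theorem norm_shiftSub_le {c : ℂ} (hc : ‖c‖ ≤ 1) (u : ℕ → ℂ) (m : ℕ) :
    ‖shiftSub c u m‖ ≤ ‖u (m + 1)‖ + ‖u m‖ :=
  (norm_sub_le _ _).trans (by gcongr; exact norm_mul_le_of_norm_le_one hc _)

theorem norm_le_add_mul_of_norm_shiftSub_le {c : ℂ} (hc : ‖c‖ ≤ 1) {u : ℕ → ℂ} {V : ℝ} {k : ℕ}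
    (hV : ∀ m < k, ‖shiftSub c u m‖ ≤ V) : ‖u k‖ ≤ ‖u 0‖ + k * V := by
  induction k with
  | zero => simp
  | succ k ih =>
    have hu : u (k + 1) = shiftSub c u k + c * u k := by simp [shiftSub]
    calc ‖u (k + 1)‖ ≤ ‖shiftSub c u k‖ + ‖u k‖ := by
          rw [hu]
          exact (norm_add_le _ _).trans (by gcongr; exact norm_mul_le_of_norm_le_one hc _)
      _ ≤ V + (‖u 0‖ + k * V) :=
          add_le_add (hV k k.lt_succ_self) (ih fun m hm => hV m (hm.trans k.lt_succ_self))
      _ = ‖u 0‖ + (k + 1 : ℕ) * V := by push_cast; ring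

theorem norm_le_of_shiftProdApply_eq_zero {a : ι → ℂ} {s : Finset ι}
    (ha : ∀ i ∈ s, ‖a i‖ ≤ 1) {u : ℕ → ℂ} (hu : shiftProdApply a s u = 0) {B : ℝ} (hB₀ : 0 ≤ B)
    (hB : ∀ k < #s, ‖u k‖ ≤ B) (k : ℕ) : ‖u k‖ ≤ (2 * (1 + k)) ^ #s * B := by
  classical
  induction s using Finset.induction generalizing u B k with
  | empty =>
    rw [← shiftProdApply_empty a u, hu]
    simp [hB₀]
  | insert j s hj ih =>
    rw [shiftProdApply_insert a hj] at hu
    rw [card_insert_of_notMem hj] at hB ⊢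
    have hv : ∀ m, ‖shiftSub (a j) u m‖ ≤ (2 * (1 + m)) ^ #s * (2 * B) :=
      ih (fun i hi => ha i (mem_insert_of_mem hi)) hu (by positivity) fun m hm =>
        (norm_shiftSub_le (ha j (mem_insert_self j s)) u m).trans
          (by linarith [hB m (by omega), hB (m + 1) (by omega)])
    set P : ℝ := (2 * (1 + k)) ^ #s
    have hP : 1 ≤ P := one_le_pow₀ (by linarith [k.cast_nonneg (α := ℝ)])
    have hvk : ∀ m < k, ‖shiftSub (a j) u m‖ ≤ P * (2 * B) := fun m hm =>
      (hv m).trans (by unfold P; gcongr)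
    calc ‖u k‖ ≤ ‖u 0‖ + k * (P * (2 * B)) :=
          norm_le_add_mul_of_norm_shiftSub_le (ha j (mem_insert_self j s)) hvk
      _ ≤ P * B + k * (P * (2 * B)) := by gcongr; nlinarith [hB 0 (by omega)]
      _ ≤ (2 * (1 + k)) ^ (#s + 1) * B := by
          rw [pow_succ]; nlinarith [mul_nonneg (sub_nonneg.2 hP) hB₀, k.cast_nonneg (α := ℝ)]

end ShiftRecurrence

theorem exists_pos_norm_le_of_finset {X L E : Type*} [TopologicalSpace X] [CompactSpace X]
    [SeminormedAddCommGroup E] {f : X → L → E} (hf : ∀ l, Continuous fun x => f x l)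
    (F : Finset L) : ∃ M, 0 < M ∧ ∀ x, ∀ l ∈ F, ‖f x l‖ ≤ M := by
  obtain ⟨M, hM⟩ := isCompact_univ.exists_bound_of_continuousOn
    (f := fun x => ∑ l ∈ F, ‖f x l‖) (by fun_prop)
  refine ⟨max M 1, by positivity, fun x l hl => ?_⟩
  calc ‖f x l‖ ≤ ∑ l ∈ F, ‖f x l‖ := single_le_sum (fun _ _ => norm_nonneg _) hl
    _ ≤ M := (Real.le_norm_self _).trans (hM x (Set.mem_univ x))
    _ ≤ max M 1 := le_max_left _ _

section Lattice

variable {σ : Type*} [DecidableEq σ]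

theorem update_add_nsmul_single {M : Type*} [AddMonoid M] (l : σ → M) (j : σ) (a b : M) (m : ℕ) :
    update l j a + m • Pi.single j b = update l j (a + m • b) := by
  ext i
  by_cases h : i = j <;> simp [h]

variable {X κ : Type*} [Fintype κ] {a : κ → X → σ → ℂ} {f : X → (σ → ℤ) → ℂ}

theorem shiftProdApply_update_eq_zero
    (hrec : ∀ x j μ, ∑ S : Finset κ, (-1) ^ #S * (∏ i ∈ S, a i x j) *
      f x (μ + (Fintype.card κ - #S) • Pi.single j 1) = 0)
    (x : X) (l : σ → ℤ) (j : σ) :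
    shiftProdApply (fun i => a i x j) univ (fun t : ℕ => f x (update l j t)) = 0 := by
  funext k
  rw [Pi.zero_apply, ← hrec x j (update l j k)]
  simp only [shiftProdApply, powerset_univ, card_univ, update_add_nsmul_single, nsmul_one]
  push_cast
  rfl

theorem norm_le_of_update_lt_card (ha : ∀ i x j, ‖a i x j‖ ≤ 1)
    (hrec : ∀ x j μ, ∑ S : Finset κ, (-1) ^ #S * (∏ i ∈ S, a i x j) *
      f x (μ + (Fintype.card κ - #S) • Pi.single j 1) = 0)
    (x : X) (l : σ → ℤ) (j : σ) {B : ℝ} (hB₀ : 0 ≤ B)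
    (hB : ∀ t < Fintype.card κ, ‖f x (update l j t)‖ ≤ B) (k : ℕ) :
    ‖f x (update l j k)‖ ≤ (2 * (1 + k)) ^ Fintype.card κ * B := by
  simpa using norm_le_of_shiftProdApply_eq_zero (fun i _ => ha i x j)
    (shiftProdApply_update_eq_zero hrec x l j) hB₀ (by simpa using hB) k

variable [Fintype σ]

theorem sum_abs_update_le (l : σ → ℤ) (j : σ) (t : ℤ) :
    ∑ i, |(update l j t i : ℝ)| ≤ ∑ i, |(l i : ℝ)| + |(t : ℝ)| := by
  calc ∑ i, |(update l j t i : ℝ)| ≤ ∑ i, (|(l i : ℝ)| + (Pi.single j |(t : ℝ)| : σ → ℝ) i) :=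
        sum_le_sum fun i _ => by by_cases h : i = j <;> simp [h]
    _ = _ := by simp [sum_add_distrib]

theorem exists_norm_le_mul_pow_of_lt_card_outside [TopologicalSpace X] [CompactSpace X]
    (ha : ∀ i x j, ‖a i x j‖ ≤ 1)
    (hrec : ∀ x j μ, ∑ S : Finset κ, (-1) ^ #S * (∏ i ∈ S, a i x j) *
      f x (μ + (Fintype.card κ - #S) • Pi.single j 1) = 0)
    (hf : ∀ l, Continuous fun x => f x l) (T : Finset σ) :
    ∃ C, 0 < C ∧ ∀ x l, (∀ j, 0 ≤ l j) → (∀ j ∉ T, l j < (Fintype.card κ : ℤ)) →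
      ‖f x l‖ ≤ C * (1 + ∑ j, |(l j : ℝ)|) ^ (Fintype.card κ * #T) := by
  set N := Fintype.card κ
  induction T using Finset.induction with
  | empty =>
    obtain ⟨C, hC, hCf⟩ := exists_pos_norm_le_of_finset hf
      (Fintype.piFinset fun _ : σ => Ico (0 : ℤ) N)
    refine ⟨C, hC, fun x l hl hlN => ?_⟩
    exact (hCf x l (Fintype.mem_piFinset.2 fun j => mem_Ico.2 ⟨hl j, hlN j (notMem_empty j)⟩)).trans
      (by simp)
  | insert j T hj ih =>
    obtain ⟨C, hC, hCb⟩ := ih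
    refine ⟨2 ^ N * (1 + N) ^ (N * #T) * C, by positivity, fun x l hl hlT => ?_⟩
    set s := ∑ i, |(l i : ℝ)|
    have hs : 0 ≤ s := sum_nonneg fun _ _ => abs_nonneg _
    obtain ⟨k, hk⟩ := Int.eq_ofNat_of_zero_le (hl j)
    have hks : (k : ℝ) ≤ s := by
      simpa [hk] using
        single_le_sum (f := fun i => |(l i : ℝ)|) (fun _ _ => abs_nonneg _) (mem_univ j)
    have hline : ∀ t < N, ‖f x (update l j t)‖ ≤ C * ((1 + N) * (1 + s)) ^ (N * #T) := by
      intro t ht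
      refine (hCb x _ (fun i => ?_) (fun i hi => ?_)).trans ?_
      · by_cases h : i = j
        · simp [h]
        · simpa [h] using hl i
      · by_cases h : i = j
        · simpa [h] using ht
        · simpa [h] using hlT i (by simp [h, hi])
      · gcongr
        calc 1 + ∑ i, |(update l j t i : ℝ)| ≤ 1 + (s + t) := by
              gcongr; simpa using sum_abs_update_le l j t
          _ ≤ (1 + N) * (1 + s) := by
              have : (t : ℝ) ≤ N := by exact_mod_cast ht.le
              nlinarith
    calc ‖f x l‖ = ‖f x (update l j k)‖ := by rw [← hk, update_eq_self]
      _ ≤ (2 * (1 + k)) ^ N * (C * ((1 + N) * (1 + s)) ^ (N * #T)) :=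
          norm_le_of_update_lt_card ha hrec x l j (by positivity) hline k
      _ ≤ (2 * (1 + s)) ^ N * (C * ((1 + N) * (1 + s)) ^ (N * #T)) := by gcongr
      _ = 2 ^ N * (1 + N) ^ (N * #T) * C * (1 + s) ^ (N * #(insert j T)) := by
          rw [card_insert_of_notMem hj, Nat.mul_succ, pow_add, mul_pow, mul_pow]
          ring

end Lattice

theorem stmt0_general (q n : ℕ)
    (X : Type*) [TopologicalSpace X] [CompactSpace X]
    (ξ : Fin n → X → (Fin q → ℤ) → ℂ)
    (hξ_bd : ∀ i x (j : Fin q), ‖ξ i x (Pi.single j 1)‖ ≤ 1)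
    (f : X → (Fin q → ℤ) → ℂ)
    (hf_cont : ∀ l : Fin q → ℤ, Continuous (fun x => f x l))
    (hrec : ∀ x (l μ : Fin q → ℤ),
      ∑ S : Finset (Fin n),
        (-1 : ℂ) ^ S.card * (∏ i ∈ S, ξ i x l) * f x (μ + (n - S.card) • l) = 0) :
    ∃ (C : ℝ) (d : ℕ), 0 < C ∧ ∀ x (l : Fin q → ℤ), (∀ j, 0 ≤ l j) →
      ‖f x l‖ ≤ C * (1 + ∑ j, |(l j : ℝ)|) ^ d := by
  obtain ⟨C, hC, hCf⟩ :=
    exists_norm_le_mul_pow_of_lt_card_outside (a := fun i x j => ξ i x (Pi.single j 1)) hξ_bd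
      (by simpa using fun x j μ => hrec x (Pi.single j 1) μ) hf_cont univ
  exact ⟨C, _, hC, fun x l hl => hCf x l hl (by simp)⟩

/-- Lemma 3.9 of Delorme–Harinck: uniform polynomial bound on the positive cone for
continuous families of functions on a lattice annihilated by a product of shift operators
with character eigenvalues of modulus at most 1. -/
theorem stmt0 (q n : ℕ) (hq : 1 ≤ q) (hn : 1 ≤ n)
    (X : Type*) [TopologicalSpace X] [CompactSpace X] [Nonempty X]
    (ξ : Fin n → X → (Fin q → ℤ) → ℂ)
    (hξ_one : ∀ i x, ξ i x 0 = 1)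
    (hξ_mul : ∀ i x (l μ : Fin q → ℤ), ξ i x (l + μ) = ξ i x l * ξ i x μ)
    (hξ_ne : ∀ i x (l : Fin q → ℤ), ξ i x l ≠ 0)
    (hξ_cont : ∀ i (j : Fin q), Continuous (fun x => ξ i x (Pi.single j 1)))
    (hξ_bd : ∀ i x (j : Fin q), ‖ξ i x (Pi.single j 1)‖ ≤ 1)
    (f : X → (Fin q → ℤ) → ℂ)
    (hf_cont : ∀ l : Fin q → ℤ, Continuous (fun x => f x l))
    (hrec : ∀ x (l μ : Fin q → ℤ),
      ∑ S : Finset (Fin n),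
        (-1 : ℂ) ^ S.card * (∏ i ∈ S, ξ i x l) * f x (μ + (n - S.card) • l) = 0) :
    ∃ (C : ℝ) (d : ℕ), 0 < C ∧ ∀ x (l : Fin q → ℤ), (∀ j, 0 ≤ l j) →
      ‖f x l‖ ≤ C * (1 + ∑ j, |(l j : ℝ)|) ^ d :=
  stmt0_general q n X ξ hξ_bd f hf_cont hrec
end

section
/- Let E be a nonzero finite-dimensional normed complex vector space and let A_1,…,A_q : E → E be pairwise commuting linear endomorphisms such that every eigenvalue of each A_j has modulus at most 1 (the spectrum of each A_j is contained in the closed unit disc). Then there exist a constant C > 0 and d ∈ ℕ such that for all (i_1,…,i_q) ∈ ℕ^q one has ‖A_1^{i_1} A_2^{i_2} ⋯ A_q^{i_q}‖ ≤ C·(1 + i_1)^d (1 + i_2)^d ⋯ (1 + i_q)^d, where ‖·‖ denotes the operator norm. -/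
/-!
Split the minimal polynomial of `a` as `∏ (X - z)`; its roots lie in the spectrum. Peeling off
one factor at a time, `a ^ (n + 1) x = z • a ^ n x + a ^ n (a - z) x` with `‖z‖ ≤ 1` shows that
`a ^ n x` grows at most one power of `1 + n` faster than `a ^ n (a - z) x`; starting from `x = 1`
this gives `‖a ^ n‖ ≤ C (1 + n) ^ deg (minpoly a)`. A product of commuting powers is then bounded
by the product of these bounds.
-/

open Polynomial

theorem mem_spectrum_of_isRoot_minpoly {K B : Type*} [Field K] [Ring B] [Algebra K B] {a : B}
    (ha : IsIntegral K a) {μ : K} (hμ : (minpoly K a).IsRoot μ) : μ ∈ spectrum K a := by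
  by_contra hμa
  obtain ⟨g, hg⟩ := dvd_iff_isRoot.mpr hμ
  have hg_monic : g.Monic := (monic_X_sub_C μ).of_mul_monic_left (hg ▸ minpoly.monic ha)
  have hg_ne : aeval a g ≠ 0 :=
    minpoly.aeval_ne_zero_of_dvdNotUnit_minpoly ha hg_monic
      ⟨hg_monic.ne_zero, X - C μ, not_isUnit_X_sub_C μ, by rw [hg, mul_comm]⟩
  have hunit : IsUnit (algebraMap K B μ - a) := spectrum.notMem_iff.mp hμa
  apply hg_ne
  rw [← hunit.mul_right_eq_zero, ← neg_sub, neg_mul, neg_eq_zero]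
  simpa [hg] using minpoly.aeval K a

theorem sum_range_one_add_pow_le (n m : ℕ) :
    ∑ k ∈ Finset.range n, (1 + k : ℝ) ^ m ≤ (1 + n) ^ (m + 1) :=
  calc ∑ k ∈ Finset.range n, (1 + k : ℝ) ^ m ≤ n * (1 + n) ^ m := by
        simpa using Finset.sum_le_card_nsmul (Finset.range n) (fun k : ℕ => (1 + k : ℝ) ^ m)
          ((1 + n : ℝ) ^ m) fun k hk => by
            gcongr; exact_mod_cast (Finset.mem_range.mp hk).le
    _ ≤ (1 + n) * (1 + n) ^ m := by gcongr; linarith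
    _ = (1 + n) ^ (m + 1) := (pow_succ' _ _).symm

theorem Finset.norm_noncommProd_le {ι 𝔸 : Type*} [NormedRing 𝔸] [NormOneClass 𝔸]
    (s : Finset ι) (f : ι → 𝔸) (comm : (s : Set ι).Pairwise (Function.onFun Commute f)) :
    ‖s.noncommProd f comm‖ ≤ ∏ i ∈ s, ‖f i‖ := by
  induction s using Finset.cons_induction with
  | empty => simp
  | cons i s hi ih =>
    rw [Finset.noncommProd_cons, Finset.prod_cons]
    exact (norm_mul_le _ _).trans (mul_le_mul_of_nonneg_left (ih _) (norm_nonneg _))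

section PolynomialGrowth

variable {𝕜 𝔸 : Type*} [NormedField 𝕜] [NormedRing 𝔸] [NormedAlgebra 𝕜 𝔸]

theorem norm_pow_mul_le_add_sum {z : 𝕜} (hz : ‖z‖ ≤ 1) (a x : 𝔸) (n : ℕ) :
    ‖a ^ n * x‖ ≤
      ‖x‖ + ∑ k ∈ Finset.range n, ‖a ^ k * ((a - algebraMap 𝕜 𝔸 z) * x)‖ := by
  induction n with
  | zero => simp
  | succ n ih =>
    have hstep : a ^ (n + 1) * x = z • (a ^ n * x) + a ^ n * ((a - algebraMap 𝕜 𝔸 z) * x) := by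
      rw [sub_mul, mul_sub, ← Algebra.smul_def, mul_smul_comm, pow_succ, mul_assoc]
      abel
    have hsmul : ‖z • (a ^ n * x)‖ ≤ ‖a ^ n * x‖ := by
      rw [norm_smul]; exact mul_le_of_le_one_left (norm_nonneg _) hz
    rw [hstep, Finset.sum_range_succ, ← add_assoc]
    exact (norm_add_le _ _).trans (add_le_add_left (hsmul.trans ih) _)

theorem exists_norm_pow_mul_le_of_aeval_mul_eq_zero (a : 𝔸) (s : Multiset 𝕜)
    (hs : ∀ z ∈ s, ‖z‖ ≤ 1) (x : 𝔸) (hx : aeval a (s.map fun z => X - C z).prod * x = 0) :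
    ∃ C : ℝ, ∀ n : ℕ, ‖a ^ n * x‖ ≤ C * (1 + n) ^ Multiset.card s := by
  induction s using Multiset.induction_on generalizing x with
  | empty => exact ⟨0, fun n => by simp_all⟩
  | cons z s ih =>
    have hx' : aeval a (s.map fun z => X - C z).prod * ((a - algebraMap 𝕜 𝔸 z) * x) = 0 := by
      simpa [mul_comm (X - C z), mul_assoc] using hx
    obtain ⟨C, hC⟩ := ih (fun w hw => hs w (Multiset.mem_cons_of_mem hw)) _ hx'
    have hC_nonneg : 0 ≤ C := by simpa using (norm_nonneg _).trans (hC 0)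
    refine ⟨‖x‖ + C, fun n => ?_⟩
    have hone : (1 : ℝ) ≤ (1 + n) ^ (Multiset.card s + 1) := one_le_pow₀ (by simp)
    calc ‖a ^ n * x‖
        ≤ ‖x‖ + ∑ k ∈ Finset.range n, C * (1 + k) ^ Multiset.card s :=
          (norm_pow_mul_le_add_sum (hs z (Multiset.mem_cons_self z s)) a x n).trans
            (add_le_add_right (Finset.sum_le_sum fun k _ => hC k) _)
      _ ≤ ‖x‖ * (1 + n) ^ (Multiset.card s + 1) + C * (1 + n) ^ (Multiset.card s + 1) := by
          rw [← Finset.mul_sum]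
          gcongr
          · exact le_mul_of_one_le_right (norm_nonneg x) hone
          · exact sum_range_one_add_pow_le n _
      _ = (‖x‖ + C) * (1 + n) ^ Multiset.card (z ::ₘ s) := by
          rw [Multiset.card_cons, add_mul]

theorem exists_norm_pow_le_of_spectrum_subset_closedBall [IsAlgClosed 𝕜] {a : 𝔸}
    (ha : IsIntegral 𝕜 a) (hspec : ∀ z ∈ spectrum 𝕜 a, ‖z‖ ≤ 1) :
    ∃ (C : ℝ) (d : ℕ), ∀ n : ℕ, ‖a ^ n‖ ≤ C * (1 + n) ^ d := by
  have hroots : ∀ z ∈ (minpoly 𝕜 a).roots, ‖z‖ ≤ 1 := fun z hz =>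
    hspec z (mem_spectrum_of_isRoot_minpoly ha (isRoot_of_mem_roots hz))
  have hkill : aeval a ((minpoly 𝕜 a).roots.map fun z => X - C z).prod * 1 = 0 := by
    rw [← (IsAlgClosed.splits _).eq_prod_roots_of_monic (minpoly.monic ha), minpoly.aeval,
      zero_mul]
  obtain ⟨C, hC⟩ := exists_norm_pow_mul_le_of_aeval_mul_eq_zero a _ hroots 1 hkill
  exact ⟨C, _, fun n => by simpa using hC n⟩

end PolynomialGrowth

/-- [DOP] Lemma 8.1, as used in the proof of Lemma 3.9 of Delorme–Harinck: pairwise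
commuting endomorphisms of a nonzero finite-dimensional normed complex vector space all
of whose eigenvalues lie in the closed unit disc have mixed powers of at most polynomial
growth in operator norm. -/
theorem stmt4 (E : Type*) [NormedAddCommGroup E] [NormedSpace ℂ E]
    [FiniteDimensional ℂ E] [Nontrivial E] (q : ℕ) (A : Fin q → E →L[ℂ] E)
    (hcomm : ∀ j j', Commute (A j) (A j'))
    (hspec : ∀ j, ∀ z ∈ spectrum ℂ (A j), ‖z‖ ≤ 1) :
    ∃ (C : ℝ) (d : ℕ), 0 < C ∧ ∀ i : Fin q → ℕ,
      ‖Finset.univ.noncommProd (fun j => A j ^ i j)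
          (fun a _ b _ _ => (hcomm a b).pow_pow _ _)‖ ≤
        C * ∏ j, ((1 : ℝ) + i j) ^ d := by
  choose C d hC using fun j =>
    exists_norm_pow_le_of_spectrum_subset_closedBall (Algebra.IsIntegral.isIntegral (A j))
      (hspec j)
  set D := Finset.univ.sup d
  have hbound : ∀ j (n : ℕ), ‖A j ^ n‖ ≤ max 1 (C j) * (1 + n) ^ D := fun j n =>
    (hC j n).trans <| mul_le_mul (le_max_right _ _)
      (pow_le_pow_right₀ (by simp) (Finset.le_sup (Finset.mem_univ j))) (by positivity)
      (by positivity)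
  refine ⟨∏ j, max 1 (C j), D, Finset.prod_pos fun j _ => by positivity, fun i => ?_⟩
  calc _ ≤ ∏ j, ‖A j ^ i j‖ := Finset.norm_noncommProd_le _ _ _
    _ ≤ ∏ j, max 1 (C j) * (1 + i j) ^ D :=
        Finset.prod_le_prod (fun j _ => norm_nonneg _) fun j _ => hbound j (i j)
    _ = _ := Finset.prod_mul_distrib
end
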